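/- The tiling 𝒲 admits a doubly periodic proper 4-colouring with respect to point-adjacency: there exist a proper 4-colouring c of the tiles of 𝒲 and two linearly independent vectors v₁, v₂ ∈ ℤ², each of which translates the set of tiles onto itself, such that c(t + v₁) = c(t) and c(t + v₂) = c(t) for every tile t. -/

import Mathlib

/-- The cells of the domino indexed by block `(i,j)` and choice `b`. -/
def tileCells (i j : ℤ) (b : Bool) : Finset (ℤ × ℤ) :=
  if (i + j) % 2 = 0 then
    -- horizontal dominoes
    if b then {(2*i, 2*j+1), (2*i+1, 2*j+1)} else {(2*i, 2*j), (2*i+1, 2*j)}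
  else
    -- vertical dominoes
    if b then {(2*i+1, 2*j), (2*i+1, 2*j+1)} else {(2*i, 2*j), (2*i, 2*j+1)}

/-- A finite set of cells is a tile of the tiling `𝒲`. -/
def IsTile (T : Finset (ℤ × ℤ)) : Prop := ∃ i j b, T = tileCells i j b

/-- The type of tiles of `𝒲`. -/
abbrev Tile := {T : Finset (ℤ × ℤ) // IsTile T}

/-- Two tiles are point-adjacent: distinct, and some cell of one is within
Chebyshev distance 1 of some cell of the other. -/
def PointAdj (T U : Tile) : Prop :=
  T ≠ U ∧ ∃ p ∈ T.1, ∃ q ∈ U.1, |p.1 - q.1| ≤ 1 ∧ |p.2 - q.2| ≤ 1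

/-- A proper 4-colouring: point-adjacent tiles get distinct colours. -/
def ProperColoring (c : Tile → Fin 4) : Prop :=
  ∀ T U, PointAdj T U → c T ≠ c U

/-- A colouring extends a seed `(S, σ)`. -/
def ExtendsSeed (S : Finset Tile) (σ : Tile → Fin 4) (c : Tile → Fin 4) : Prop :=
  ∀ T ∈ S, c T = σ T

/-- A seed is perfect if exactly one proper 4-colouring extends it. -/
def PerfectSeed (S : Finset Tile) (σ : Tile → Fin 4) : Prop :=
  ∃! c, ProperColoring c ∧ ExtendsSeed S σ c

/-- The translate of a set of cells by a vector `v`. -/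
def tileTranslate (v : ℤ × ℤ) (T : Finset (ℤ × ℤ)) : Finset (ℤ × ℤ) :=
  T.image (· + v)

/-!
Colour a cell by the orientation of its 2×2 block and its position inside it: `0`/`1` for the
bottom/top row of a horizontal block, `2`/`3` for the left/right column of a vertical block.
This is constant on dominoes, and two cells at Chebyshev distance at most 1 with the same colour
lie in the same block, hence in the same domino. The colouring is invariant under every vector
`(2a, 2b)` with `a + b` even, which is also a symmetry of the tiling.
-/

def cellColour (p : ℤ × ℤ) : ℤ :=
  if (p.1 / 2 + p.2 / 2) % 2 = 0 then p.2 % 2 else 2 + p.1 % 2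

lemma cellColour_nonneg (p : ℤ × ℤ) : 0 ≤ cellColour p := by
  unfold cellColour; split_ifs <;> omega

lemma cellColour_lt_four (p : ℤ × ℤ) : cellColour p < 4 := by
  unfold cellColour; split_ifs <;> omega

lemma div_two_eq_of_near_of_cellColour_eq {p q : ℤ × ℤ} (h₁ : |p.1 - q.1| ≤ 1)
    (h₂ : |p.2 - q.2| ≤ 1) (hc : cellColour p = cellColour q) :
    p.1 / 2 = q.1 / 2 ∧ p.2 / 2 = q.2 / 2 := by
  rw [abs_le] at h₁ h₂
  unfold cellColour at hc
  split_ifs at hc <;> omega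

lemma of_mem_tileCells {i j : ℤ} {b : Bool} {p : ℤ × ℤ} (hp : p ∈ tileCells i j b) :
    p.1 / 2 = i ∧ p.2 / 2 = j ∧
      cellColour p = (if (i + j) % 2 = 0 then 0 else 2) + (b.toNat : ℤ) := by
  unfold tileCells at hp
  cases b <;> simp only [Bool.false_eq_true, ↓reduceIte] at hp <;> split_ifs at hp <;>
    simp only [Finset.mem_insert, Finset.mem_singleton] at hp <;>
    rcases hp with rfl | rfl <;> simp only [cellColour, Bool.toNat_false, Bool.toNat_true] <;>
    split_ifs <;> omega

lemma tileCells_nonempty (i j : ℤ) (b : Bool) : (tileCells i j b).Nonempty := by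
  unfold tileCells; split_ifs <;> simp

lemma tileCells_eq_of_near_of_cellColour_eq {i j i' j' : ℤ} {b b' : Bool} {p q : ℤ × ℤ}
    (hp : p ∈ tileCells i j b) (hq : q ∈ tileCells i' j' b')
    (h₁ : |p.1 - q.1| ≤ 1) (h₂ : |p.2 - q.2| ≤ 1) (hc : cellColour p = cellColour q) :
    tileCells i j b = tileCells i' j' b' := by
  obtain ⟨rfl, rfl, hcp⟩ := of_mem_tileCells hp
  obtain ⟨rfl, rfl, hcq⟩ := of_mem_tileCells hq
  obtain ⟨hx, hy⟩ := div_two_eq_of_near_of_cellColour_eq h₁ h₂ hc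
  rw [hx, hy] at hcp ⊢
  have hb : b = b' := by
    cases b <;> cases b' <;> simp only [Bool.toNat_false, Bool.toNat_true] at hcp hcq <;>
      first | rfl | omega
  rw [hb]

def IsPeriod (v : ℤ × ℤ) : Prop :=
  2 ∣ v.1 ∧ 2 ∣ v.2 ∧ 4 ∣ v.1 + v.2

lemma cellColour_add_of_isPeriod {v : ℤ × ℤ} (hv : IsPeriod v) (p : ℤ × ℤ) :
    cellColour (p + v) = cellColour p := by
  obtain ⟨h₁, h₂, h₁₂⟩ := hv
  simp only [cellColour, Prod.fst_add, Prod.snd_add]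
  split_ifs <;> omega

lemma tileTranslate_tileCells {v : ℤ × ℤ} (hv : IsPeriod v) (i j : ℤ) (b : Bool) :
    tileTranslate v (tileCells i j b) = tileCells (i + v.1 / 2) (j + v.2 / 2) b := by
  obtain ⟨h₁, h₂, h₁₂⟩ := hv
  have hij : (i + v.1 / 2 + (j + v.2 / 2)) % 2 = (i + j) % 2 := by omega
  unfold tileTranslate tileCells
  rw [hij]
  ext ⟨x, y⟩
  split_ifs <;>
    simp only [Finset.image_insert, Finset.image_singleton, Finset.mem_insert,
      Finset.mem_singleton, Prod.ext_iff, Prod.fst_add, Prod.snd_add] <;>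
    omega

lemma image_tileTranslate_setOf_isTile {v : ℤ × ℤ} (hv : IsPeriod v) :
    tileTranslate v '' {T | IsTile T} = {T | IsTile T} := by
  ext T
  constructor
  · rintro ⟨S, ⟨i, j, b, rfl⟩, rfl⟩
    exact ⟨_, _, b, tileTranslate_tileCells hv i j b⟩
  · rintro ⟨i, j, b, rfl⟩
    refine ⟨tileCells (i - v.1 / 2) (j - v.2 / 2) b, ⟨_, _, b, rfl⟩, ?_⟩
    rw [tileTranslate_tileCells hv, sub_add_cancel, sub_add_cancel]

lemma tile_nonempty (T : Tile) : T.1.Nonempty := by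
  obtain ⟨i, j, b, h⟩ := T.2
  exact h ▸ tileCells_nonempty i j b

lemma cellColour_eq_of_mem_tile (T : Tile) {p q : ℤ × ℤ} (hp : p ∈ T.1) (hq : q ∈ T.1) :
    cellColour p = cellColour q := by
  obtain ⟨i, j, b, h⟩ := T.2
  rw [h] at hp hq
  rw [(of_mem_tileCells hp).2.2, (of_mem_tileCells hq).2.2]

noncomputable def tileColour (T : Tile) : Fin 4 :=
  ⟨(cellColour (tile_nonempty T).choose).toNat, by
    have := cellColour_lt_four (tile_nonempty T).choose; omega⟩

lemma tileColour_eq_cellColour (T : Tile) {p : ℤ × ℤ} (hp : p ∈ T.1) :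
    ((tileColour T : ℕ) : ℤ) = cellColour p := by
  rw [tileColour, Fin.val_mk, Int.toNat_of_nonneg (cellColour_nonneg _)]
  exact cellColour_eq_of_mem_tile T (tile_nonempty T).choose_spec hp

lemma properColoring_tileColour : ProperColoring tileColour := by
  rintro T U ⟨hne, p, hp, q, hq, h₁, h₂⟩ hTU
  have hc : cellColour p = cellColour q := by
    rw [← tileColour_eq_cellColour T hp, ← tileColour_eq_cellColour U hq, hTU]
  obtain ⟨i, j, b, hT⟩ := T.2
  obtain ⟨i', j', b', hU⟩ := U.2
  rw [hT] at hp
  rw [hU] at hq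
  exact hne (Subtype.ext (by rw [hT, hU, tileCells_eq_of_near_of_cellColour_eq hp hq h₁ h₂ hc]))

lemma tileColour_eq_of_tileTranslate {v : ℤ × ℤ} (hv : IsPeriod v) {t t' : Tile}
    (h : t'.1 = tileTranslate v t.1) : tileColour t' = tileColour t := by
  obtain ⟨p, hp⟩ := tile_nonempty t
  have hp' : p + v ∈ t'.1 := h ▸ Finset.mem_image_of_mem _ hp
  apply Fin.ext
  have hcol := tileColour_eq_cellColour t' hp'
  rw [cellColour_add_of_isPeriod hv, ← tileColour_eq_cellColour t hp] at hcol
  exact_mod_cast hcol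

/-- The tiling `𝒲` admits a doubly periodic proper 4-colouring for
point-adjacency: a proper 4-colouring invariant under translation by two
linearly independent vectors, each mapping the set of tiles onto itself. -/
theorem exists_doubly_periodic_proper_coloring :
    ∃ (c : Tile → Fin 4) (v₁ v₂ : ℤ × ℤ),
      ProperColoring c ∧ LinearIndependent ℤ ![v₁, v₂] ∧
      (tileTranslate v₁ '' {T | IsTile T} = {T | IsTile T}) ∧
      (tileTranslate v₂ '' {T | IsTile T} = {T | IsTile T}) ∧
      (∀ t t' : Tile, t'.1 = tileTranslate v₁ t.1 → c t' = c t) ∧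
      (∀ t t' : Tile, t'.1 = tileTranslate v₂ t.1 → c t' = c t) := by
  have h₁ : IsPeriod (4, 0) := ⟨by norm_num, by norm_num, by norm_num⟩
  have h₂ : IsPeriod (0, 4) := ⟨by norm_num, by norm_num, by norm_num⟩
  have hindep : LinearIndependent ℤ ![((4 : ℤ), (0 : ℤ)), (0, 4)] := by
    rw [LinearIndependent.pair_iff]
    intro s t h
    simp only [Prod.smul_mk, smul_eq_mul, Prod.mk_add_mk, Prod.mk_eq_zero] at h
    omega
  exact ⟨tileColour, (4, 0), (0, 4), properColoring_tileColour, hindep,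
    image_tileTranslate_setOf_isTile h₁, image_tileTranslate_setOf_isTile h₂,
    fun _ _ => tileColour_eq_of_tileTranslate h₁,
    fun _ _ => tileColour_eq_of_tileTranslate h₂⟩
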